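/- arXiv:1605.01958 — 4 statements merged into one kernel-verified Lean document; each statement's English description precedes it below -/
import Mathlib

section
/- Suppose the Poincaré polynomial of (G, Re) is palindrome, and let m ∈ G be an element with ℓ(m) = d. Then for every g ∈ G one has ℓ(g) + ℓ(g⁻¹m) = d. In particular, every factorization m = gh in G satisfies ℓ(g) + ℓ(h) = ℓ(m). -/
/-- The length of `g ∈ G` with respect to a generating set `Re`:
the smallest `n` such that `g` is a product of `n` elements of `Re`. -/
noncomputable def wordLength {G : Type*} [Group G] (Re : Set G) (g : G) : ℕ :=
  sInf {n : ℕ | ∃ l : List G, (∀ x ∈ l, x ∈ Re) ∧ l.length = n ∧ l.prod = g}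

private lemma wordLength_set_nonempty {G : Type*} [Group G] [Finite G] {Re : Set G}
    (hgen : Subgroup.closure Re = ⊤) (g : G) :
    {n : ℕ | ∃ l : List G, (∀ x ∈ l, x ∈ Re) ∧ l.length = n ∧ l.prod = g}.Nonempty := by
  suffices h : ∃ l : List G, (∀ x ∈ l, x ∈ Re) ∧ l.prod = g by
    obtain ⟨l, h1, h2⟩ := h; exact ⟨l.length, l, h1, rfl, h2⟩
  have mulmem : ∀ a b : G, (∃ l : List G, (∀ x ∈ l, x ∈ Re) ∧ l.prod = a) →
      (∃ l : List G, (∀ x ∈ l, x ∈ Re) ∧ l.prod = b) →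
      (∃ l : List G, (∀ x ∈ l, x ∈ Re) ∧ l.prod = a * b) := by
    rintro a b ⟨l1, h1, p1⟩ ⟨l2, h2, p2⟩
    refine ⟨l1 ++ l2, ?_, by simp [p1, p2]⟩
    intro x hx
    rcases List.mem_append.mp hx with h | h
    · exact h1 x h
    · exact h2 x h
  let H : Subgroup G :=
  { carrier := {g : G | ∃ l : List G, (∀ x ∈ l, x ∈ Re) ∧ l.prod = g}
    one_mem' := ⟨[], by simp, by simp⟩
    mul_mem' := fun {a b} ha hb => mulmem a b ha hb
    inv_mem' := by
      intro x hx
      have hpow : ∀ k : ℕ, ∃ l : List G, (∀ y ∈ l, y ∈ Re) ∧ l.prod = x ^ k := by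
        intro k
        induction k with
        | zero => exact ⟨[], by simp, by simp⟩
        | succ n ih =>
          have := mulmem _ _ ih hx
          simpa [pow_succ] using this
      have hord : 0 < orderOf x := orderOf_pos x
      have hxinv : x⁻¹ = x ^ (orderOf x - 1) := by
        have : x * x ^ (orderOf x - 1) = 1 := by
          rw [← pow_succ', Nat.sub_add_cancel hord]
          exact pow_orderOf_eq_one x
        exact inv_eq_of_mul_eq_one_right this
      rw [hxinv]
      exact hpow _ }
  have hle : Subgroup.closure Re ≤ H :=
    Subgroup.closure_le H |>.mpr (fun x hx => ⟨[x], by simpa using hx, by simp⟩)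
  have : g ∈ H := by
    rw [hgen] at hle
    exact hle (Subgroup.mem_top g)
  exact this

private lemma wordLength_exists_list {G : Type*} [Group G] [Finite G] {Re : Set G}
    (hgen : Subgroup.closure Re = ⊤) (g : G) :
    ∃ l : List G, (∀ x ∈ l, x ∈ Re) ∧ l.length = wordLength Re g ∧ l.prod = g :=
  Nat.sInf_mem (wordLength_set_nonempty hgen g)

private lemma wordLength_mul_le {G : Type*} [Group G] [Finite G] {Re : Set G}
    (hgen : Subgroup.closure Re = ⊤) (a b : G) :
    wordLength Re (a * b) ≤ wordLength Re a + wordLength Re b := by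
  obtain ⟨la, hla, hlena, hproda⟩ := wordLength_exists_list hgen a
  obtain ⟨lb, hlb, hlenb, hprodb⟩ := wordLength_exists_list hgen b
  apply Nat.sInf_le
  refine ⟨la ++ lb, ?_, by simp [hlena, hlenb], by simp [hproda, hprodb]⟩
  intro x hx
  rcases List.mem_append.mp hx with h | h
  · exact hla x h
  · exact hlb x h

/-- If the Poincaré polynomial of `(G, Re)` is palindrome and `ℓ(m) = d`, then
`ℓ(g) + ℓ(g⁻¹m) = d` for every `g`; in particular every factorization `m = g * h`
satisfies `ℓ(g) + ℓ(h) = ℓ(m)`. -/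
theorem length_add_length_inv_mul_of_palindrome
    {G : Type*} [Group G] [Finite G] (Re : Set G)
    (hgen : Subgroup.closure Re = ⊤) (hne : (1 : G) ∉ Re)
    (d : ℕ) (hub : ∀ g : G, wordLength Re g ≤ d) (hex : ∃ g : G, wordLength Re g = d)
    (hpal : ∀ i ≤ d, Nat.card {g : G // wordLength Re g = i}
      = Nat.card {g : G // wordLength Re g = d - i})
    (m : G) (hm : wordLength Re m = d) :
    (∀ g : G, wordLength Re g + wordLength Re (g⁻¹ * m) = d) ∧
    (∀ g h : G, g * h = m →
      wordLength Re g + wordLength Re h = wordLength Re m) := by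
  classical
  haveI : Fintype G := Fintype.ofFinite G
  set ℓ : G → ℕ := wordLength Re with hℓ
  -- pointwise lower bound
  have key_ge : ∀ g : G, d ≤ ℓ g + ℓ (g⁻¹ * m) := by
    intro g
    have h1 := wordLength_mul_le hgen g (g⁻¹ * m)
    rw [mul_inv_cancel_left] at h1
    exact le_trans (le_of_eq hm.symm) h1
  -- fiber cardinalities
  set a : ℕ → ℕ := fun i => (Finset.univ.filter fun g : G => ℓ g = i).card with ha
  have hcard : ∀ i : ℕ, Nat.card {g : G // ℓ g = i} = a i := by
    intro i
    rw [Nat.card_eq_fintype_card, Fintype.card_subtype]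
  have hpal' : ∀ i ≤ d, a i = a (d - i) := by
    intro i hi
    rw [← hcard, ← hcard]
    exact hpal i hi
  -- fiberwise sum
  have helper : ∀ f : ℕ → ℕ, ∑ g : G, f (ℓ g) = ∑ i ∈ Finset.range (d + 1), f i * a i := by
    intro f
    rw [← Finset.sum_fiberwise_of_maps_to (g := ℓ) (t := Finset.range (d + 1))
      (fun g _ => Finset.mem_range.mpr (Nat.lt_succ_of_le (hub g)))]
    refine Finset.sum_congr rfl fun i _ => ?_
    rw [ha]
    rw [Finset.sum_congr rfl (fun g hg => by
      rw [(Finset.mem_filter.mp hg).2])]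
    rw [Finset.sum_const, smul_eq_mul, mul_comm]
  -- the reflection identity
  have hreflect : ∑ i ∈ Finset.range (d + 1), (d - i) * a i
      = ∑ i ∈ Finset.range (d + 1), i * a i := by
    have := Finset.sum_range_reflect (fun i => (d - i) * a i) (d + 1)
    calc ∑ i ∈ Finset.range (d + 1), (d - i) * a i
        = ∑ i ∈ Finset.range (d + 1), (d - (d + 1 - 1 - i)) * a (d + 1 - 1 - i) := this.symm
      _ = ∑ i ∈ Finset.range (d + 1), i * a i := by
          refine Finset.sum_congr rfl fun i hi => ?_
          have hi' : i ≤ d := Nat.lt_succ_iff.mp (Finset.mem_range.mp hi)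
          have h1 : d + 1 - 1 - i = d - i := by omega
          have h2 : d - (d - i) = i := by omega
          rw [h1, h2, ← hpal' i hi']
  -- total sums
  have hsum_eq : ∑ g : G, (d - ℓ g) = ∑ g : G, ℓ g :=
    calc ∑ g : G, (d - ℓ g) = ∑ i ∈ Finset.range (d + 1), (d - i) * a i := helper _
      _ = ∑ i ∈ Finset.range (d + 1), i * a i := hreflect
      _ = ∑ g : G, ℓ g := (helper (fun i => i)).symm
  have hbij : ∑ g : G, ℓ (g⁻¹ * m) = ∑ g : G, ℓ g :=
    Fintype.sum_equiv ((Equiv.inv G).trans (Equiv.mulRight m))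
      (fun g => ℓ (g⁻¹ * m)) ℓ (fun g => rfl)
  have htotal : ∑ g : G, (ℓ g + ℓ (g⁻¹ * m)) = ∑ g : G, d := by
    rw [Finset.sum_add_distrib, hbij]
    nth_rewrite 1 [← hsum_eq]
    rw [← Finset.sum_add_distrib]
    refine Finset.sum_congr rfl fun g _ => ?_
    have := hub g
    omega
  have hpoint : ∀ g : G, ℓ g + ℓ (g⁻¹ * m) = d := by
    have := (Finset.sum_eq_sum_iff_of_le
      (fun (g : G) _ => key_ge g)).mp htotal.symm
    intro g
    exact (this g (Finset.mem_univ g)).symm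
  refine ⟨hpoint, fun g h hgh => ?_⟩
  have : g⁻¹ * m = h := by rw [← hgh]; group
  rw [hm, ← this]
  exact hpoint g
end

section
/- Suppose the Poincaré polynomial of (G, Re) is palindrome, and let m ∈ G be the unique element with ℓ(m) = d. Then conjugation by m preserves length: for every g ∈ G one has ℓ(m⁻¹ g m) = ℓ(g). In particular, the map g ↦ m⁻¹ g m restricts to a permutation of the generating set Re. -/
section helpers

variable {G : Type*} [Group G] {Re : Set G}

lemma wl_exists_repr [Finite G] (hgen : Subgroup.closure Re = ⊤) (g : G) :
    ∃ l : List G, (∀ x ∈ l, x ∈ Re) ∧ l.prod = g := by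
  have hg : g ∈ Submonoid.closure Re := by
    have hmem : g ∈ Subgroup.closure Re := hgen ▸ Subgroup.mem_top g
    refine Subgroup.closure_induction (fun x hx => Submonoid.subset_closure hx)
      (Submonoid.one_mem _) (fun x y _ _ hx hy => Submonoid.mul_mem _ hx hy)
      (fun x _ hx => ?_) hmem
    have hx1 : x ^ orderOf x = 1 := pow_orderOf_eq_one x
    have hpos : 0 < orderOf x := orderOf_pos x
    have : x⁻¹ = x ^ (orderOf x - 1) := by
      rw [eq_comm, eq_inv_iff_mul_eq_one, ← pow_succ, Nat.sub_add_cancel hpos, hx1]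
    rw [this]
    exact Submonoid.pow_mem _ hx _
  exact Submonoid.exists_list_of_mem_closure hg

lemma wl_le_of_list (l : List G) (hl : ∀ x ∈ l, x ∈ Re) :
    wordLength Re l.prod ≤ l.length :=
  Nat.sInf_le ⟨l, hl, rfl, rfl⟩

lemma wl_spec [Finite G] (hgen : Subgroup.closure Re = ⊤) (g : G) :
    ∃ l : List G, (∀ x ∈ l, x ∈ Re) ∧ l.length = wordLength Re g ∧ l.prod = g := by
  have hne : {n : ℕ | ∃ l : List G, (∀ x ∈ l, x ∈ Re) ∧ l.length = n ∧ l.prod = g}.Nonempty := by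
    obtain ⟨l, hl, hp⟩ := wl_exists_repr hgen g
    exact ⟨l.length, l, hl, rfl, hp⟩
  exact Nat.sInf_mem hne

lemma wl_mul_le [Finite G] (hgen : Subgroup.closure Re = ⊤) (g h : G) :
    wordLength Re (g * h) ≤ wordLength Re g + wordLength Re h := by
  obtain ⟨l₁, hl₁, hlen₁, hp₁⟩ := wl_spec hgen g
  obtain ⟨l₂, hl₂, hlen₂, hp₂⟩ := wl_spec hgen h
  have := wl_le_of_list (Re := Re) (l₁ ++ l₂) (by
    intro x hx
    rcases List.mem_append.mp hx with hx | hx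
    · exact hl₁ x hx
    · exact hl₂ x hx)
  simpa [hp₁, hp₂, hlen₁, hlen₂] using this

end helpers

/-- If the Poincaré polynomial of `(G, Re)` is palindrome and `m` is the unique
element of maximal length `d`, then conjugation by `m` preserves length; in
particular it restricts to a permutation of the generating set `Re`. -/
theorem conj_by_max_length_preserves_length_of_palindrome
    {G : Type*} [Group G] [Finite G] (Re : Set G)
    (hgen : Subgroup.closure Re = ⊤) (hne : (1 : G) ∉ Re)
    (d : ℕ) (hub : ∀ g : G, wordLength Re g ≤ d) (hex : ∃ g : G, wordLength Re g = d)
    (hpal : ∀ i ≤ d, Nat.card {g : G // wordLength Re g = i}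
      = Nat.card {g : G // wordLength Re g = d - i})
    (m : G) (hm : wordLength Re m = d)
    (hmu : ∀ g : G, wordLength Re g = d → g = m) :
    (∀ g : G, wordLength Re (m⁻¹ * g * m) = wordLength Re g) ∧
    Set.BijOn (fun g : G => m⁻¹ * g * m) Re Re := by
  classical
  have := Fintype.ofFinite G
  set N : ℕ → ℕ := fun i => (Finset.univ.filter (fun g : G => wordLength Re g = i)).card with hN
  have hNpal : ∀ i ≤ d, N i = N (d - i) := by
    intro i hi
    have := hpal i hi
    simpa [hN, Nat.card_eq_fintype_card, Fintype.card_subtype] using this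
  -- sum fiberwise
  have hfib : ∀ f : ℕ → ℕ, ∑ g : G, f (wordLength Re g)
      = ∑ i ∈ Finset.range (d + 1), N i * f i := by
    intro f
    rw [← Finset.sum_fiberwise_of_maps_to (g := fun g : G => wordLength Re g)
      (t := Finset.range (d + 1))
      (fun g _ => Finset.mem_range.mpr (Nat.lt_succ_of_le (hub g)))
      (fun g => f (wordLength Re g))]
    refine Finset.sum_congr rfl fun i _ => ?_
    rw [Finset.sum_congr rfl (fun g hg => by
      rw [(Finset.mem_filter.mp hg).2]), Finset.sum_const, smul_eq_mul]
  -- palindrome gives sum identity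
  have hsum : ∑ g : G, (d - wordLength Re g) = ∑ g : G, wordLength Re g := by
    have e1 := hfib (fun i => d - i)
    have e2 := hfib (fun i => i)
    rw [e1, e2]
    have h1 : ∑ i ∈ Finset.range (d + 1), N i * (d - i)
        = ∑ i ∈ Finset.range (d + 1), N (d - i) * (d - i) := by
      refine Finset.sum_congr rfl fun i hi => ?_
      rw [hNpal i (Nat.lt_succ_iff.mp (Finset.mem_range.mp hi))]
    rw [h1]
    have := Finset.sum_range_reflect (fun j => N j * j) (d + 1)
    simpa using this
  -- key lemma
  have key : ∀ φ : G ≃ G, (∀ g, d ≤ wordLength Re g + wordLength Re (φ g)) →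
      ∀ g, wordLength Re (φ g) = d - wordLength Re g := by
    intro φ hφ
    have hle : ∀ g : G, d - wordLength Re g ≤ wordLength Re (φ g) := fun g => by
      have := hφ g; omega
    have hsum2 : ∑ g : G, (d - wordLength Re g) = ∑ g : G, wordLength Re (φ g) := by
      rw [hsum, ← Equiv.sum_comp φ (wordLength Re)]
    have := (Finset.sum_eq_sum_iff_of_le (fun g _ => hle g)).mp hsum2
    intro g
    exact (this g (Finset.mem_univ g)).symm
  have hA : ∀ g : G, wordLength Re (g⁻¹ * m) = d - wordLength Re g := by
    refine key ((Equiv.inv G).trans (Equiv.mulRight m)) fun g => ?_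
    have := wl_mul_le hgen g (g⁻¹ * m)
    simp only [Equiv.trans_apply, Equiv.inv_apply, Equiv.coe_mulRight]
    rw [show g * (g⁻¹ * m) = m by group, hm] at this
    omega
  have hB : ∀ g : G, wordLength Re (m * g⁻¹) = d - wordLength Re g := by
    refine key ((Equiv.inv G).trans (Equiv.mulLeft m)) fun g => ?_
    have := wl_mul_le hgen (m * g⁻¹) g
    simp only [Equiv.trans_apply, Equiv.inv_apply, Equiv.coe_mulLeft]
    rw [show m * g⁻¹ * g = m by group, hm] at this
    omega
  have hC : ∀ g : G, wordLength Re (m * g) = wordLength Re (g * m) := by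
    intro g
    have h1 := hA g⁻¹
    have h2 := hB g⁻¹
    rw [inv_inv] at h1 h2
    rw [h1, h2]
  have hconj : ∀ g : G, wordLength Re (m⁻¹ * g * m) = wordLength Re g := by
    intro g
    calc wordLength Re (m⁻¹ * g * m) = wordLength Re (m * (m⁻¹ * g)) := (hC (m⁻¹ * g)).symm
      _ = wordLength Re g := by rw [show m * (m⁻¹ * g) = g by group]
  -- membership characterization
  have hmem : ∀ g : G, wordLength Re g = 1 ↔ g ∈ Re := by
    intro g
    constructor
    · intro h1
      obtain ⟨l, hl, hlen, hp⟩ := wl_spec hgen g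
      rw [h1] at hlen
      match l, hlen with
      | [x], _ =>
        have : x = g := by simpa using hp
        exact this ▸ hl x (by simp)
    · intro hg
      have hle : wordLength Re g ≤ 1 := by
        have := wl_le_of_list (Re := Re) [g] (by simpa using hg)
        simpa using this
      have hne0 : wordLength Re g ≠ 0 := by
        intro h0
        obtain ⟨l, hl, hlen, hp⟩ := wl_spec hgen g
        rw [h0] at hlen
        have : l = [] := List.length_eq_zero_iff.mp hlen
        rw [this] at hp
        simp at hp
        exact hne (hp ▸ hg)
      omega
  refine ⟨hconj, ?_, ?_, ?_⟩
  · intro g hg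
    exact (hmem _).mp (by rw [hconj]; exact (hmem g).mpr hg)
  · intro a _ b _ hab
    simp only at hab
    have : m * (m⁻¹ * a * m) * m⁻¹ = m * (m⁻¹ * b * m) * m⁻¹ := by rw [hab]
    group at this
    simpa using this
  · intro h hh
    refine ⟨m * h * m⁻¹, ?_, by group⟩
    have h2 : wordLength Re (m⁻¹ * (m * h * m⁻¹) * m) = wordLength Re (m * h * m⁻¹) := hconj _
    rw [show m⁻¹ * (m * h * m⁻¹) * m = h by group] at h2
    exact (hmem _).mp (h2 ▸ (hmem h).mpr hh)
end

section
/- Let k be a field. The k-bilinear multiplication on the free k-module with basis G (i.e., on finitely supported functions G →₀ k) determined on basis elements by g · h = gh if ℓ(gh) = ℓ(g) + ℓ(h) and g · h = 0 if ℓ(gh) < ℓ(g) + ℓ(h), is associative, and the basis element e is a two-sided unit for it. (Thus the Hasse algebra H_G(Re) of Definition 2.3(1') is a well-defined associative unital k-algebra.) -/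
/-- The multiplication of the Hasse algebra `H_G(Re)`: the `k`-bilinear extension
to the free `k`-module on `G` of the rule `g · h = gh` if `ℓ(gh) = ℓ(g) + ℓ(h)`
and `g · h = 0` otherwise. -/
noncomputable def hasseMul {G : Type*} [Group G] (Re : Set G)
    {k : Type*} [Field k] (x y : G →₀ k) : G →₀ k :=
  x.sum fun g a => y.sum fun h b =>
    if wordLength Re (g * h) = wordLength Re g + wordLength Re h then
      Finsupp.single (g * h) (a * b)
    else 0

/-!
If `ℓ` is subadditive, then for `g, h, i ∈ G` the two conditions
`ℓ(gh) = ℓ(g) + ℓ(h)` and `ℓ(ghi) = ℓ(gh) + ℓ(i)` together say that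
`ℓ(ghi) = ℓ(g) + ℓ(h) + ℓ(i)`, and so do the two conditions obtained by bracketing the other
way. Hence `(g · h) · i` and `g · (h · i)` agree on basis elements, and associativity follows by bilinearity.
Subadditivity holds because in a finite group `Re` generates `G` as a monoid, so that shortest
words exist and can be concatenated; `ℓ(e) = 0` makes `e` a unit.
-/

open Finsupp

section WordLength

variable {G : Type*} [Group G] (Re : Set G)

lemma wordLength_le_length {g : G} {l : List G} (hl : ∀ x ∈ l, x ∈ Re) (hg : l.prod = g) :
    wordLength Re g ≤ l.length :=
  Nat.sInf_le ⟨l, hl, rfl, hg⟩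

@[simp]
lemma wordLength_one : wordLength Re 1 = 0 :=
  Nat.le_zero.mp (wordLength_le_length Re (l := []) (by simp) rfl)

variable {Re}

lemma exists_list_length_eq_wordLength (hRe : Submonoid.closure Re = ⊤) (g : G) :
    ∃ l : List G, (∀ x ∈ l, x ∈ Re) ∧ l.length = wordLength Re g ∧ l.prod = g := by
  obtain ⟨l, hl, hg⟩ := Submonoid.exists_list_of_mem_closure (hRe.symm ▸ Submonoid.mem_top g)
  exact Nat.sInf_mem (s := {n | ∃ l : List G, (∀ x ∈ l, x ∈ Re) ∧ l.length = n ∧ l.prod = g})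
    ⟨l.length, l, hl, rfl, hg⟩

lemma wordLength_mul_le_s6 (hRe : Submonoid.closure Re = ⊤) (g h : G) :
    wordLength Re (g * h) ≤ wordLength Re g + wordLength Re h := by
  obtain ⟨lg, hlg, leng, rfl⟩ := exists_list_length_eq_wordLength hRe g
  obtain ⟨lh, hlh, lenh, rfl⟩ := exists_list_length_eq_wordLength hRe h
  rw [← leng, ← lenh, ← List.length_append, ← List.prod_append]
  exact wordLength_le_length Re (fun x hx => (List.mem_append.mp hx).elim (hlg x) (hlh x)) rfl

end WordLength

lemma additive_mul_assoc_iff {M : Type*} [Semigroup M] {L : M → ℕ}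
    (hL : ∀ a b, L (a * b) ≤ L a + L b) (a b c : M) :
    (L (a * b) = L a + L b ∧ L (a * b * c) = L (a * b) + L c) ↔
      (L (b * c) = L b + L c ∧ L (a * (b * c)) = L a + L (b * c)) := by
  have := hL (a * b) c
  have := hL a b
  have := hL b c
  have := hL a (b * c)
  rw [mul_assoc] at *
  omega

namespace hasseMul

variable {G : Type*} [Group G] (Re : Set G) {k : Type*} [Field k]

lemma single_single (g h : G) (a b : k) :
    hasseMul Re (single g a) (single h b) =
      if wordLength Re (g * h) = wordLength Re g + wordLength Re h then
        single (g * h) (a * b)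
      else 0 := by
  unfold hasseMul
  rw [sum_single_index (by rw [sum_single_index (by simp)]; simp),
    sum_single_index (by simp)]

@[simp]
lemma zero_left (y : G →₀ k) : hasseMul Re 0 y = 0 := by
  simp [hasseMul]

@[simp]
lemma zero_right (x : G →₀ k) : hasseMul Re x 0 = 0 := by
  simp [hasseMul]

lemma add_left (x x' y : G →₀ k) :
    hasseMul Re (x + x') y = hasseMul Re x y + hasseMul Re x' y := by
  unfold hasseMul
  rw [sum_add_index' (by simp)]
  intro g a a'
  rw [← sum_add]
  congr 1; funext h b
  split_ifs <;> simp [add_mul]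

lemma add_right (x y y' : G →₀ k) :
    hasseMul Re x (y + y') = hasseMul Re x y + hasseMul Re x y' := by
  unfold hasseMul
  rw [← sum_add]
  congr 1; funext g a
  rw [sum_add_index' (by simp)]
  intro h b b'
  split_ifs <;> simp [mul_add]

lemma single_assoc (hsub : ∀ g h : G, wordLength Re (g * h) ≤ wordLength Re g + wordLength Re h)
    (g h i : G) (a b c : k) :
    hasseMul Re (hasseMul Re (single g a) (single h b)) (single i c) =
      hasseMul Re (single g a) (hasseMul Re (single h b) (single i c)) := by
  have key := additive_mul_assoc_iff hsub g h i
  rw [mul_assoc] at key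
  rw [single_single, single_single]
  split_ifs <;> simp only [single_single, zero_left, zero_right, mul_assoc] <;> split_ifs <;>
    tauto

lemma assoc (hsub : ∀ g h : G, wordLength Re (g * h) ≤ wordLength Re g + wordLength Re h)
    (x y z : G →₀ k) :
    hasseMul Re (hasseMul Re x y) z = hasseMul Re x (hasseMul Re y z) := by
  induction x using Finsupp.induction_linear with
  | zero => simp
  | add x x' hx hx' => simp only [add_left, hx, hx']
  | single g a =>
  induction y using Finsupp.induction_linear with
  | zero => simp
  | add y y' hy hy' => simp only [add_left, add_right, hy, hy']
  | single h b =>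
  induction z using Finsupp.induction_linear with
  | zero => simp
  | add z z' hz hz' => simp only [add_right, hz, hz']
  | single i c => exact single_assoc Re hsub g h i a b c

lemma one_left (x : G →₀ k) : hasseMul Re (single 1 1) x = x := by
  induction x using Finsupp.induction_linear with
  | zero => simp
  | add x x' hx hx' => rw [add_right, hx, hx']
  | single g a => simp [single_single]

lemma one_right (x : G →₀ k) : hasseMul Re x (single 1 1) = x := by
  induction x using Finsupp.induction_linear with
  | zero => simp
  | add x x' hx hx' => rw [add_left, hx, hx']
  | single g a => simp [single_single]

end hasseMul

theorem hasseMul_assoc_one_general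
    {G : Type*} [Group G] [Finite G] (Re : Set G)
    (hgen : Subgroup.closure Re = ⊤)
    (k : Type*) [Field k] :
    (∀ g h : G, hasseMul Re (Finsupp.single g (1 : k)) (Finsupp.single h (1 : k))
      = if wordLength Re (g * h) = wordLength Re g + wordLength Re h then
          Finsupp.single (g * h) (1 : k)
        else 0) ∧
    (∀ x y z : G →₀ k, hasseMul Re (hasseMul Re x y) z
      = hasseMul Re x (hasseMul Re y z)) ∧
    (∀ x : G →₀ k, hasseMul Re (Finsupp.single (1 : G) (1 : k)) x = x) ∧
    (∀ x : G →₀ k, hasseMul Re x (Finsupp.single (1 : G) (1 : k)) = x) := by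
  have hRe : Submonoid.closure Re = ⊤ := by
    rw [← Subgroup.closure_toSubmonoid_of_finite, hgen, Subgroup.top_toSubmonoid]
  exact ⟨fun g h => by rw [hasseMul.single_single, mul_one],
    hasseMul.assoc Re (wordLength_mul_le_s6 hRe), hasseMul.one_left Re, hasseMul.one_right Re⟩

/-- The Hasse algebra multiplication is given on basis elements by the stated rule,
is associative, and the basis element `e` is a two-sided unit for it: the Hasse
algebra `H_G(Re)` is a well-defined associative unital `k`-algebra. -/
theorem hasseMul_assoc_one
    {G : Type*} [Group G] [Finite G] (Re : Set G)
    (hgen : Subgroup.closure Re = ⊤) (hne : (1 : G) ∉ Re)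
    (k : Type*) [Field k] :
    (∀ g h : G, hasseMul Re (Finsupp.single g (1 : k)) (Finsupp.single h (1 : k))
      = if wordLength Re (g * h) = wordLength Re g + wordLength Re h then
          Finsupp.single (g * h) (1 : k)
        else 0) ∧
    (∀ x y z : G →₀ k, hasseMul Re (hasseMul Re x y) z
      = hasseMul Re x (hasseMul Re y z)) ∧
    (∀ x : G →₀ k, hasseMul Re (Finsupp.single (1 : G) (1 : k)) x = x) ∧
    (∀ x : G →₀ k, hasseMul Re x (Finsupp.single (1 : G) (1 : k)) = x) :=
  hasseMul_assoc_one_general Re hgen k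
end

section
/- Let n ≥ 2 and consider the dihedral group D_{2n} of order 2n (Mathlib's DihedralGroup n) with generating set Re = {sr 0, sr 1} and associated length function ℓ. Then ℓ(g) ≤ n for all g ∈ D_{2n}; there is exactly one element of length 0 and exactly one element of length n; and for every k with 1 ≤ k ≤ n − 1 there are exactly two elements of length k. Equivalently, the Poincaré polynomial of (D_{2n}, Re) equals 1 + 2t + 2t² + ⋯ + 2t^{n−1} + t^n = (1+t)(1 + t + ⋯ + t^{n−1}). -/
section WordLength

variable {G : Type*} [Group G] {S : Set G}

theorem wordLength_prod_le {l : List G} (hl : ∀ x ∈ l, x ∈ S) :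
    wordLength S l.prod ≤ l.length :=
  Nat.sInf_le ⟨l, hl, rfl, rfl⟩

theorem exists_length_eq_wordLength {g : G}
    (hg : ∃ l : List G, (∀ x ∈ l, x ∈ S) ∧ l.prod = g) :
    ∃ l : List G, (∀ x ∈ l, x ∈ S) ∧ l.length = wordLength S g ∧ l.prod = g := by
  obtain ⟨l, hl, hprod⟩ := hg
  exact Nat.sInf_mem (s := {m | ∃ l : List G, (∀ x ∈ l, x ∈ S) ∧ l.length = m ∧ l.prod = g})
    ⟨l.length, l, hl, rfl, hprod⟩

end WordLength

namespace DihedralGroup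

variable {n : ℕ}

/-- `zigzag n j` is `sr 0 * sr 1 * sr 0 * ⋯` with `j` factors if `j ≥ 0`, and
`sr 1 * sr 0 * sr 1 * ⋯` with `-j` factors if `j < 0`. -/
def zigzag (n : ℕ) (j : ℤ) : DihedralGroup n :=
  if Even j then r (j / 2 : ℤ) else sr (-(j / 2 : ℤ))

theorem zigzag_two_mul (m : ℤ) : zigzag n (2 * m) = r m := by
  simp [zigzag]

theorem zigzag_two_mul_add_one (m : ℤ) : zigzag n (2 * m + 1) = sr (-m) := by
  simp [zigzag, show (2 * m + 1) / 2 = m by omega]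

theorem zigzag_zero : zigzag n 0 = 1 := by
  simpa using zigzag_two_mul (n := n) 0

theorem sr_intCast_mul_zigzag (t j : ℤ) :
    sr (t : ZMod n) * zigzag n j = zigzag n (1 - 2 * t - j) := by
  obtain ⟨m, rfl | rfl⟩ := Int.even_or_odd' j
  · rw [zigzag_two_mul, show 1 - 2 * t - 2 * m = 2 * (-t - m) + 1 by ring,
      zigzag_two_mul_add_one, sr_mul_r]
    congr 1; push_cast; ring
  · rw [zigzag_two_mul_add_one, show 1 - 2 * t - (2 * m + 1) = 2 * (-t - m) by ring,
      zigzag_two_mul, sr_mul_sr]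
    congr 1; push_cast; ring

theorem sr_zero_mul_zigzag (j : ℤ) : sr 0 * zigzag n j = zigzag n (1 - j) := by
  simpa using sr_intCast_mul_zigzag (n := n) 0 j

theorem sr_one_mul_zigzag (j : ℤ) : sr 1 * zigzag n j = zigzag n (-1 - j) := by
  simpa [sub_eq_add_neg, add_comm] using sr_intCast_mul_zigzag (n := n) 1 j

theorem zigzag_eq_zigzag_iff {i j : ℤ} : zigzag n i = zigzag n j ↔ (i : ZMod (2 * n)) = j := by
  rw [ZMod.intCast_eq_intCast_iff_dvd_sub]
  obtain ⟨a, rfl | rfl⟩ := Int.even_or_odd' i <;> obtain ⟨b, rfl | rfl⟩ := Int.even_or_odd' j <;>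
    simp only [zigzag_two_mul, zigzag_two_mul_add_one, r.injEq, sr.injEq,
      ZMod.intCast_eq_intCast_iff_dvd_sub, reduceCtorEq, false_iff]
  case inl.inl => rw [← mul_sub, Nat.cast_mul, Nat.cast_two, mul_dvd_mul_iff_left two_ne_zero]
  case inr.inr =>
    rw [neg_sub_neg, dvd_sub_comm, add_sub_add_right_eq_sub, ← mul_sub, Nat.cast_mul,
      Nat.cast_two, mul_dvd_mul_iff_left two_ne_zero]
  all_goals
    intro h
    have : (2 : ℤ) ∣ _ := (dvd_mul_right 2 (n : ℤ)).trans (by exact_mod_cast h)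
    omega

theorem zigzag_surjective : Function.Surjective (zigzag n) := by
  rintro (m | m)
  · exact ⟨2 * (m.cast : ℤ), by rw [zigzag_two_mul, ZMod.intCast_zmod_cast]⟩
  · exact ⟨2 * (-m.cast : ℤ) + 1, by rw [zigzag_two_mul_add_one, neg_neg, ZMod.intCast_zmod_cast]⟩

theorem exists_natAbs_le_zigzag_eq [NeZero n] (g : DihedralGroup n) :
    ∃ j : ℤ, j.natAbs ≤ n ∧ zigzag n j = g := by
  obtain ⟨i, rfl⟩ := zigzag_surjective g
  refine ⟨(i : ZMod (2 * n)).valMinAbs, ?_, zigzag_eq_zigzag_iff.mpr (ZMod.coe_valMinAbs _)⟩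
  simpa using ZMod.natAbs_valMinAbs_le (i : ZMod (2 * n))

theorem exists_prod_eq_zigzag (j : ℤ) : ∃ l : List (DihedralGroup n),
    (∀ x ∈ l, x ∈ ({sr 0, sr 1} : Set _)) ∧ l.length = j.natAbs ∧ l.prod = zigzag n j := by
  induction h : j.natAbs generalizing j with
  | zero => exact ⟨[], by simp, rfl, by rw [Int.natAbs_eq_zero.mp h, zigzag_zero, List.prod_nil]⟩
  | succ m ih =>
    rcases lt_or_gt_of_ne (show j ≠ 0 by omega) with hj | hj
    · obtain ⟨l, hl, hlen, hprod⟩ := ih (-1 - j) (by omega)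
      refine ⟨sr 1 :: l, by simpa using hl, by simp [hlen], ?_⟩
      rw [List.prod_cons, hprod, sr_one_mul_zigzag, sub_sub_cancel]
    · obtain ⟨l, hl, hlen, hprod⟩ := ih (1 - j) (by omega)
      refine ⟨sr 0 :: l, by simpa using hl, by simp [hlen], ?_⟩
      rw [List.prod_cons, hprod, sr_zero_mul_zigzag, sub_sub_cancel]

theorem exists_zigzag_eq_prod {l : List (DihedralGroup n)}
    (hl : ∀ x ∈ l, x ∈ ({sr 0, sr 1} : Set _)) :
    ∃ j : ℤ, j.natAbs ≤ l.length ∧ zigzag n j = l.prod := by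
  induction l with
  | nil => exact ⟨0, le_rfl, zigzag_zero⟩
  | cons x l ih =>
    obtain ⟨j, hj, hprod⟩ := ih fun y hy => hl y (List.mem_cons_of_mem x hy)
    rw [List.prod_cons, ← hprod, List.length_cons]
    rcases hl x List.mem_cons_self with rfl | rfl
    · exact ⟨1 - j, by omega, (sr_zero_mul_zigzag j).symm⟩
    · exact ⟨-1 - j, by omega, (sr_one_mul_zigzag j).symm⟩

theorem wordLength_zigzag {j : ℤ} (hj : j.natAbs ≤ n) :
    wordLength {sr 0, sr 1} (zigzag n j) = j.natAbs := by
  obtain ⟨l, hl, hlen, hprod⟩ := exists_prod_eq_zigzag (n := n) j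
  refine le_antisymm (hlen ▸ hprod ▸ wordLength_prod_le hl) ?_
  obtain ⟨l', hl', hlen', hprod'⟩ := exists_length_eq_wordLength ⟨l, hl, hprod⟩
  obtain ⟨i, hi, hzi⟩ := exists_zigzag_eq_prod hl'
  rw [hprod', zigzag_eq_zigzag_iff] at hzi
  refine (ZMod.natAbs_min_of_le_div_two _ j i hzi.symm ?_).trans (hlen' ▸ hi)
  simpa using hj

theorem wordLength_le [NeZero n] (g : DihedralGroup n) : wordLength {sr 0, sr 1} g ≤ n := by
  obtain ⟨j, hj, rfl⟩ := exists_natAbs_le_zigzag_eq g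
  rwa [wordLength_zigzag hj]

theorem setOf_wordLength_eq [NeZero n] {k : ℕ} (hk : k ≤ n) :
    {g : DihedralGroup n | wordLength {sr 0, sr 1} g = k} = {zigzag n k, zigzag n (-k)} := by
  ext g
  constructor
  · intro hg
    obtain ⟨j, hj, rfl⟩ := exists_natAbs_le_zigzag_eq g
    rw [Set.mem_ofPred_eq, wordLength_zigzag hj] at hg
    rcases Int.natAbs_eq j with h | h <;> rw [h, hg] <;> simp
  · rintro (rfl | rfl) <;> simp [wordLength_zigzag, hk]

theorem zigzag_eq_zigzag_neg_iff {k : ℤ} : zigzag n k = zigzag n (-k) ↔ (n : ℤ) ∣ k := by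
  rw [zigzag_eq_zigzag_iff, ZMod.intCast_eq_intCast_iff_dvd_sub, Nat.cast_mul, Nat.cast_two,
    show -k - k = 2 * -k by ring, mul_dvd_mul_iff_left two_ne_zero, dvd_neg]

theorem card_wordLength_eq [NeZero n] {k : ℕ} (hk : k ≤ n) :
    Nat.card {g : DihedralGroup n // wordLength {sr 0, sr 1} g = k} = if n ∣ k then 1 else 2 := by
  rw [← Set.coe_ofPred, Nat.card_coe_set_eq, setOf_wordLength_eq hk]
  split_ifs with h
  · rw [zigzag_eq_zigzag_neg_iff.mpr (by exact_mod_cast h), Set.pair_eq_singleton,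
      Set.ncard_singleton]
  · exact Set.ncard_pair (mt zigzag_eq_zigzag_neg_iff.mp (by exact_mod_cast h))

end DihedralGroup

open DihedralGroup in
/-- For `n ≥ 2`, the Poincaré polynomial of the dihedral group `D_{2n}` with
generating set `{sr 0, sr 1}` is `1 + 2t + ⋯ + 2t^{n-1} + t^n`: every element
has length at most `n`, there is exactly one element of length `0`, exactly one
of length `n`, and exactly two of each length `k` with `1 ≤ k ≤ n - 1`. -/
theorem dihedralGroup_poincare_polynomial
    (n : ℕ) (hn : 2 ≤ n) :
    (∀ g : DihedralGroup n, wordLength ({sr 0, sr 1} : Set (DihedralGroup n)) g ≤ n) ∧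
    Nat.card {g : DihedralGroup n //
      wordLength ({sr 0, sr 1} : Set (DihedralGroup n)) g = 0} = 1 ∧
    Nat.card {g : DihedralGroup n //
      wordLength ({sr 0, sr 1} : Set (DihedralGroup n)) g = n} = 1 ∧
    (∀ k : ℕ, 1 ≤ k → k ≤ n - 1 →
      Nat.card {g : DihedralGroup n //
        wordLength ({sr 0, sr 1} : Set (DihedralGroup n)) g = k} = 2) := by
  have : NeZero n := ⟨by omega⟩
  refine ⟨wordLength_le, ?_, ?_, fun k hk₁ hk₂ => ?_⟩
  · rw [card_wordLength_eq n.zero_le, if_pos (dvd_zero n)]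
  · rw [card_wordLength_eq le_rfl, if_pos dvd_rfl]
  · rw [card_wordLength_eq (by omega), if_neg (Nat.not_dvd_of_pos_of_lt hk₁ (by omega))]
end
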